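/- If U_RU, U_LU, U_LD, U_RD ∈ G and the wave speeds are S_L = 2·min over the four states of λ_A^{(1)}, S_R = 2·max of λ_A^{(4)}, S_D = 2·min of λ_B^{(1)}, S_U = 2·max of λ_B^{(4)}, with S_L < 0 < S_R and S_D < 0 < S_U, then the 2D HLL intermediate state U* = (D*, m*, E*) satisfies D* > 0, E* > 0, and (E*)² - (D*)² - |m*|² > 0, i.e. U* ∈ G. -/

import Mathlib

/-- A 2D special RHD state given by primitive variables. -/
structure RHDState where
  ρ : ℝ
  u1 : ℝ
  u2 : ℝ
  p : ℝ
  hρ : 0 < ρ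
  hp : 0 < p
  hu : u1 ^ 2 + u2 ^ 2 < 1

namespace RHDState

/-- Lorentz factor `γ = 1/√(1-|u|²)`. -/
noncomputable def lorentz (s : RHDState) : ℝ :=
  1 / Real.sqrt (1 - (s.u1 ^ 2 + s.u2 ^ 2))

/-- Specific enthalpy `h = 1 + e + p/ρ` with `e = p/((Γ-1)ρ)`. -/
noncomputable def enth (Γ : ℝ) (s : RHDState) : ℝ :=
  1 + s.p / ((Γ - 1) * s.ρ) + s.p / s.ρ

/-- Sound speed `c_s = √(Γp/(ρh))`. -/
noncomputable def cs (Γ : ℝ) (s : RHDState) : ℝ :=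
  Real.sqrt (Γ * s.p / (s.ρ * s.enth Γ))

/-- Conserved mass density `D = ργ`. -/
noncomputable def D (s : RHDState) : ℝ := s.ρ * s.lorentz

/-- Momentum `m₁ = ρhγ²u₁`. -/
noncomputable def m1 (Γ : ℝ) (s : RHDState) : ℝ :=
  s.ρ * s.enth Γ * s.lorentz ^ 2 * s.u1

/-- Momentum `m₂ = ρhγ²u₂`. -/
noncomputable def m2 (Γ : ℝ) (s : RHDState) : ℝ :=
  s.ρ * s.enth Γ * s.lorentz ^ 2 * s.u2

/-- Total energy `E = ρhγ² - p`. -/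
noncomputable def En (Γ : ℝ) (s : RHDState) : ℝ :=
  s.ρ * s.enth Γ * s.lorentz ^ 2 - s.p

/-- Conserved vector `U = (D, m₁, m₂, E)`. -/
noncomputable def U (Γ : ℝ) (s : RHDState) : Fin 4 → ℝ :=
  ![s.D, s.m1 Γ, s.m2 Γ, s.En Γ]

/-- `x`-direction flux `F(U) = (Du₁, m₁u₁ + p, m₂u₁, (E+p)u₁)`. -/
noncomputable def Fx (Γ : ℝ) (s : RHDState) : Fin 4 → ℝ :=
  ![s.D * s.u1, s.m1 Γ * s.u1 + s.p, s.m2 Γ * s.u1, (s.En Γ + s.p) * s.u1]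

/-- `y`-direction flux `G(U) = (Du₂, m₁u₂, m₂u₂ + p, (E+p)u₂)`. -/
noncomputable def Fy (Γ : ℝ) (s : RHDState) : Fin 4 → ℝ :=
  ![s.D * s.u2, s.m1 Γ * s.u2, s.m2 Γ * s.u2 + s.p, (s.En Γ + s.p) * s.u2]

/-- Smallest eigenvalue of `∂F/∂U`. -/
noncomputable def lamX1 (Γ : ℝ) (s : RHDState) : ℝ :=
  (s.u1 * (1 - (s.cs Γ) ^ 2) - s.cs Γ / s.lorentz *
      Real.sqrt (1 - s.u1 ^ 2 - (s.cs Γ) ^ 2 * s.u2 ^ 2)) /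
    (1 - (s.cs Γ) ^ 2 * (s.u1 ^ 2 + s.u2 ^ 2))

/-- Largest eigenvalue of `∂F/∂U`. -/
noncomputable def lamX4 (Γ : ℝ) (s : RHDState) : ℝ :=
  (s.u1 * (1 - (s.cs Γ) ^ 2) + s.cs Γ / s.lorentz *
      Real.sqrt (1 - s.u1 ^ 2 - (s.cs Γ) ^ 2 * s.u2 ^ 2)) /
    (1 - (s.cs Γ) ^ 2 * (s.u1 ^ 2 + s.u2 ^ 2))

/-- Smallest eigenvalue of `∂G/∂U`. -/
noncomputable def lamY1 (Γ : ℝ) (s : RHDState) : ℝ :=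
  (s.u2 * (1 - (s.cs Γ) ^ 2) - s.cs Γ / s.lorentz *
      Real.sqrt (1 - s.u2 ^ 2 - (s.cs Γ) ^ 2 * s.u1 ^ 2)) /
    (1 - (s.cs Γ) ^ 2 * (s.u1 ^ 2 + s.u2 ^ 2))

/-- Largest eigenvalue of `∂G/∂U`. -/
noncomputable def lamY4 (Γ : ℝ) (s : RHDState) : ℝ :=
  (s.u2 * (1 - (s.cs Γ) ^ 2) + s.cs Γ / s.lorentz *
      Real.sqrt (1 - s.u2 ^ 2 - (s.cs Γ) ^ 2 * s.u1 ^ 2)) /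
    (1 - (s.cs Γ) ^ 2 * (s.u1 ^ 2 + s.u2 ^ 2))

end RHDState

/-- The admissible set `G` in conserved variables `(D, m₁, m₂, E)`. -/
def admissibleSet : Set (Fin 4 → ℝ) :=
  {X | X 0 > 0 ∧ X 3 - Real.sqrt ((X 0) ^ 2 + (X 1) ^ 2 + (X 2) ^ 2) > 0}

/-!
The average `U*` is a positive combination of the eight vectors `(S/2) • U - F` and
`F - (S/2) • U` attached to the corner states, so it suffices that each lies in the convex cone
`{D > 0, E > √(D² + |m|²)}`. In primitive variables, for a speed `c` beyond the extreme
characteristic speed, `E² - D² - |m|²` of `c • U - F` equals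
`γ²(c - u)²((ρh - p)² - ρ² - p²) + p²(c² - 1)`. This is positive for `|c| ≥ 1` since
`(ρh - p)² > ρ² + p²`, and for `|c| < 1` since `c` lies beyond both roots of the characteristic
quadratic `(1 - c_s²)γ²(c - u)² - c_s²(1 - c²)` and `c_s²((ρh - p)² - ρ²) > p²`; both
thermodynamic inequalities need `Γ ≤ 2`. The `y`-direction and negative speeds reduce to this by
swapping and reflecting the velocity components.
-/

/-- `G` without the square root: the open future light cone with time axis `E`. -/
def admissibleCone : ConvexCone ℝ (Fin 4 → ℝ) where
  carrier := {X | 0 < X 0 ∧ 0 < X 3 ∧ X 0 ^ 2 + X 1 ^ 2 + X 2 ^ 2 < X 3 ^ 2}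
  smul_mem' := by
    rintro a ha X ⟨hX0, hX3, hX⟩
    refine ⟨by simpa using mul_pos ha hX0, by simpa using mul_pos ha hX3, ?_⟩
    simp only [Pi.smul_apply, smul_eq_mul]
    nlinarith [mul_pos ha ha]
  add_mem' := by
    rintro X ⟨hX0, hX3, hX⟩ Y ⟨hY0, hY3, hY⟩
    refine ⟨by simpa using add_pos hX0 hY0, by simpa using add_pos hX3 hY3, ?_⟩
    have hdot : X 0 * Y 0 + X 1 * Y 1 + X 2 * Y 2 < X 3 * Y 3 := by
      nlinarith [sq_nonneg (X 0 * Y 1 - X 1 * Y 0), sq_nonneg (X 0 * Y 2 - X 2 * Y 0),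
        sq_nonneg (X 1 * Y 2 - X 2 * Y 1), mul_pos hX3 hY3,
        sq_nonneg (X 0 * Y 0 + X 1 * Y 1 + X 2 * Y 2 + X 3 * Y 3)]
    simp only [Pi.add_apply]
    nlinarith

lemma mem_admissibleCone {X : Fin 4 → ℝ} :
    X ∈ admissibleCone ↔ 0 < X 0 ∧ 0 < X 3 ∧ X 0 ^ 2 + X 1 ^ 2 + X 2 ^ 2 < X 3 ^ 2 :=
  Iff.rfl

lemma mem_admissibleCone_of_momentum_sq_eq {X Y : Fin 4 → ℝ} (hX : X ∈ admissibleCone)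
    (h0 : Y 0 = X 0) (h12 : Y 1 ^ 2 + Y 2 ^ 2 = X 1 ^ 2 + X 2 ^ 2) (h3 : Y 3 = X 3) :
    Y ∈ admissibleCone := by
  obtain ⟨hX0, hX3, hX⟩ := hX
  exact ⟨h0 ▸ hX0, h3 ▸ hX3, by rw [h0, h3]; linarith⟩

lemma pos_of_sq_lt_sq_of_mul_lt {u x y : ℝ} (hu : u ^ 2 ≤ 1) (hxy : y ^ 2 < x ^ 2)
    (h : u * y < x) : 0 < x := by
  by_contra! hx
  nlinarith [sq_nonneg (u * y + x), sq_nonneg (u + 1), sq_nonneg (u - 1), mul_self_nonneg y]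

/-- The largest eigenvalue of the flux Jacobian in a direction in which the fluid velocity has
component `u` and transverse component `v`, for sound speed `a`. -/
noncomputable def maxSpeed (u v a : ℝ) : ℝ :=
  (u * (1 - a ^ 2) + a * √(1 - (u ^ 2 + v ^ 2)) * √(1 - u ^ 2 - a ^ 2 * v ^ 2)) /
    (1 - a ^ 2 * (u ^ 2 + v ^ 2))

section maxSpeed

variable {u v a c : ℝ}

lemma lt_maxSpeed (ha0 : 0 < a) (ha1 : a ^ 2 < 1) (huv : u ^ 2 + v ^ 2 < 1) :
    u < maxSpeed u v a := by
  have hA : 0 < 1 - a ^ 2 * (u ^ 2 + v ^ 2) := by nlinarith [sq_nonneg u, sq_nonneg v]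
  have hr := Real.sq_sqrt (by linarith : 0 ≤ 1 - (u ^ 2 + v ^ 2))
  have hq := Real.sq_sqrt (by nlinarith [sq_nonneg v] : 0 ≤ 1 - u ^ 2 - a ^ 2 * v ^ 2)
  set r := √(1 - (u ^ 2 + v ^ 2))
  set q := √(1 - u ^ 2 - a ^ 2 * v ^ 2)
  have hr0 : 0 < r := Real.sqrt_pos.2 (by linarith)
  have hq0 : 0 < q := Real.sqrt_pos.2 (by nlinarith [sq_nonneg v])
  have hqr : u * a * r < q := by
    have : q ^ 2 - (u * a * r) ^ 2 = (1 - u ^ 2) * (1 - a ^ 2 * (u ^ 2 + v ^ 2)) := by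
      linear_combination hq - u ^ 2 * a ^ 2 * hr
    nlinarith [mul_pos hA (by nlinarith [sq_nonneg v] : (0:ℝ) < 1 - u ^ 2)]
  rw [maxSpeed, lt_div_iff₀ hA]
  have : u * (1 - a ^ 2) + a * r * q - u * (1 - a ^ 2 * (u ^ 2 + v ^ 2)) =
      a * r * (q - u * a * r) := by
    linear_combination u * a ^ 2 * hr
  nlinarith [mul_pos (mul_pos ha0 hr0) (sub_pos.2 hqr)]

/-- `maxSpeed u v a` is the larger root of this quadratic in `c`, whose leading coefficient is
positive. -/
lemma sq_mul_le_of_maxSpeed_le (ha0 : 0 ≤ a) (ha1 : a ^ 2 < 1) (huv : u ^ 2 + v ^ 2 < 1)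
    (h : maxSpeed u v a ≤ c) :
    a ^ 2 * (1 - c ^ 2) * (1 - (u ^ 2 + v ^ 2)) ≤ (1 - a ^ 2) * (c - u) ^ 2 := by
  have hA : 0 < 1 - a ^ 2 * (u ^ 2 + v ^ 2) := by nlinarith [sq_nonneg u, sq_nonneg v]
  have hr := Real.sq_sqrt (by linarith : 0 ≤ 1 - (u ^ 2 + v ^ 2))
  have hq := Real.sq_sqrt (by nlinarith [sq_nonneg v] : 0 ≤ 1 - u ^ 2 - a ^ 2 * v ^ 2)
  set r := √(1 - (u ^ 2 + v ^ 2))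
  set q := √(1 - u ^ 2 - a ^ 2 * v ^ 2)
  set A := 1 - a ^ 2 * (u ^ 2 + v ^ 2)
  have hfactor : A * ((1 - a ^ 2) * (c - u) ^ 2 - a ^ 2 * (1 - c ^ 2) * (1 - (u ^ 2 + v ^ 2))) =
      (A * c - (u * (1 - a ^ 2) + a * r * q)) * (A * c - (u * (1 - a ^ 2) - a * r * q)) := by
    linear_combination a ^ 2 * r ^ 2 * hq + a ^ 2 * (1 - u ^ 2 - a ^ 2 * v ^ 2) * hr
  have hplus : 0 ≤ A * c - (u * (1 - a ^ 2) + a * r * q) := by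
    rw [maxSpeed, div_le_iff₀ hA] at h
    linarith
  have hminus : 0 ≤ A * c - (u * (1 - a ^ 2) - a * r * q) := by
    nlinarith [mul_nonneg (mul_nonneg ha0 (Real.sqrt_nonneg (1 - (u ^ 2 + v ^ 2))))
      (Real.sqrt_nonneg (1 - u ^ 2 - a ^ 2 * v ^ 2))]
  nlinarith [mul_nonneg hplus hminus]

end maxSpeed

/-- `c • U - F` in primitive variables, with `H = ρh`, sound speed `a`, and `u` the velocity
component along the flux direction. -/
lemma smul_sub_flux_mem_admissibleCone {ρ p H γ u v a c : ℝ} (hρ : 0 < ρ) (hp : 0 < p)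
    (hpH : p < H) (hH : ρ ^ 2 + p ^ 2 < (H - p) ^ 2) (ha : p ^ 2 < a ^ 2 * ((H - p) ^ 2 - ρ ^ 2))
    (ha1 : a ^ 2 < 1) (hγ0 : 0 < γ) (hγ : γ ^ 2 * (1 - (u ^ 2 + v ^ 2)) = 1) (hcu : u < c)
    (hc : a ^ 2 * (1 - c ^ 2) * (1 - (u ^ 2 + v ^ 2)) ≤ (1 - a ^ 2) * (c - u) ^ 2) :
    ![ρ * γ * (c - u), H * γ ^ 2 * u * (c - u) - p, H * γ ^ 2 * v * (c - u),
      H * γ ^ 2 * (c - u) - p * c] ∈ admissibleCone := by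
  simp only [mem_admissibleCone, Matrix.cons_val]
  set K := (H - p) ^ 2 - ρ ^ 2 - p ^ 2
  have hK : 0 < K := by linarith
  have hcu2 : 0 < γ ^ 2 * (c - u) ^ 2 := by positivity
  have hcone : (H * γ ^ 2 * (c - u) - p * c) ^ 2 - ((ρ * γ * (c - u)) ^ 2 +
      (H * γ ^ 2 * u * (c - u) - p) ^ 2 + (H * γ ^ 2 * v * (c - u)) ^ 2) =
      γ ^ 2 * (c - u) ^ 2 * K + p ^ 2 * (c ^ 2 - 1) := by
    linear_combination H ^ 2 * γ ^ 2 * (c - u) ^ 2 * hγ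
  have hpos : 0 < γ ^ 2 * (c - u) ^ 2 * K + p ^ 2 * (c ^ 2 - 1) := by
    rcases le_or_gt 1 (c ^ 2) with hc1 | hc1
    · nlinarith [mul_pos hcu2 hK, sq_nonneg p]
    · have hcK : a ^ 2 * (1 - c ^ 2) * K ≤ (1 - a ^ 2) * (γ ^ 2 * (c - u) ^ 2 * K) := by
        have := mul_le_mul_of_nonneg_right hc (by positivity : 0 ≤ γ ^ 2 * K)
        linear_combination this - a ^ 2 * (1 - c ^ 2) * K * hγ
      nlinarith [mul_pos (sub_pos.2 hc1) (by linarith : 0 < a ^ 2 * (K + p ^ 2) - p ^ 2)]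
  have henergy : u * (H * γ ^ 2 * u * (c - u) - p) < H * γ ^ 2 * (c - u) - p * c := by
    have : 1 ≤ γ ^ 2 * (1 - u ^ 2) := by nlinarith [sq_nonneg (γ * v)]
    nlinarith [mul_pos (sub_pos.2 hcu) (by nlinarith : 0 < H * (γ ^ 2 * (1 - u ^ 2)) - p)]
  have hu : u ^ 2 ≤ 1 := by nlinarith [sq_nonneg v, sq_nonneg γ]
  have hm : (H * γ ^ 2 * u * (c - u) - p) ^ 2 < (H * γ ^ 2 * (c - u) - p * c) ^ 2 := by
    linarith [sq_nonneg (ρ * γ * (c - u)), sq_nonneg (H * γ ^ 2 * v * (c - u))]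
  exact ⟨by positivity, pos_of_sq_lt_sq_of_mul_lt hu hm henergy, by linarith⟩

lemma two_le_div_sub_one {Γ : ℝ} (hΓ1 : 1 < Γ) (hΓ2 : Γ ≤ 2) : 2 ≤ Γ / (Γ - 1) := by
  rw [le_div_iff₀ (by linarith)]
  linarith

namespace RHDState

variable {Γ c : ℝ} (s : RHDState)

lemma lorentz_pos : 0 < s.lorentz :=
  one_div_pos.2 (Real.sqrt_pos.2 (by linarith [s.hu]))

lemma lorentz_sq_mul : s.lorentz ^ 2 * (1 - (s.u1 ^ 2 + s.u2 ^ 2)) = 1 := by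
  rw [lorentz, div_pow, Real.sq_sqrt (by linarith [s.hu])]
  field_simp [(by linarith [s.hu] : 1 - (s.u1 ^ 2 + s.u2 ^ 2) ≠ 0)]

lemma rho_mul_enth (hΓ : 1 < Γ) : s.ρ * s.enth Γ = s.ρ + Γ / (Γ - 1) * s.p := by
  have := s.hρ.ne'
  have : Γ - 1 ≠ 0 := by linarith
  rw [enth]
  field_simp
  ring

lemma p_lt_rho_mul_enth (hΓ : 1 < Γ) : s.p < s.ρ * s.enth Γ := by
  have : 1 < Γ / (Γ - 1) := by rw [one_lt_div (by linarith)]; linarith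
  rw [s.rho_mul_enth hΓ]
  nlinarith [s.hρ, s.hp]

lemma cs_sq_mul (hΓ : 1 < Γ) : s.cs Γ ^ 2 * (s.ρ * s.enth Γ) = Γ * s.p := by
  have hH := s.hp.trans (s.p_lt_rho_mul_enth hΓ)
  rw [cs, Real.sq_sqrt (div_nonneg (by nlinarith [s.hp]) hH.le), div_mul_cancel₀ _ hH.ne']

lemma cs_pos (hΓ : 1 < Γ) : 0 < s.cs Γ :=
  Real.sqrt_pos.2 (div_pos (mul_pos (by linarith) s.hp) (s.hp.trans (s.p_lt_rho_mul_enth hΓ)))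

lemma cs_sq_lt_one (hΓ1 : 1 < Γ) (hΓ2 : Γ ≤ 2) : s.cs Γ ^ 2 < 1 := by
  have hH := s.hp.trans (s.p_lt_rho_mul_enth hΓ1)
  have hk := two_le_div_sub_one hΓ1 hΓ2
  refine lt_of_mul_lt_mul_right ?_ hH.le
  rw [s.cs_sq_mul hΓ1, one_mul, s.rho_mul_enth hΓ1]
  nlinarith [s.hρ, s.hp]

lemma rho_sq_add_p_sq_lt (hΓ1 : 1 < Γ) (hΓ2 : Γ ≤ 2) :
    s.ρ ^ 2 + s.p ^ 2 < (s.ρ * s.enth Γ - s.p) ^ 2 := by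
  have hk := two_le_div_sub_one hΓ1 hΓ2
  have hle : s.ρ + s.p ≤ s.ρ * s.enth Γ - s.p := by
    rw [s.rho_mul_enth hΓ1]
    nlinarith [s.hp]
  nlinarith [pow_le_pow_left₀ (add_pos s.hρ s.hp).le hle 2, mul_pos s.hρ s.hp]

lemma p_sq_lt_cs_sq_mul (hΓ1 : 1 < Γ) (hΓ2 : Γ ≤ 2) :
    s.p ^ 2 < s.cs Γ ^ 2 * ((s.ρ * s.enth Γ - s.p) ^ 2 - s.ρ ^ 2) := by
  have hk := two_le_div_sub_one hΓ1 hΓ2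
  have hΓk : Γ * (Γ / (Γ - 1) - 1) = Γ / (Γ - 1) := by
    field_simp [(by linarith : Γ - 1 ≠ 0)]
    ring
  have hH := s.hp.trans (s.p_lt_rho_mul_enth hΓ1)
  refine lt_of_mul_lt_mul_right ?_ hH.le
  rw [mul_right_comm, s.cs_sq_mul hΓ1, s.rho_mul_enth hΓ1]
  set k := Γ / (Γ - 1)
  have : Γ * s.p * ((s.ρ + k * s.p - s.p) ^ 2 - s.ρ ^ 2) =
      k * s.p ^ 2 * (2 * s.ρ + (k - 1) * s.p) := by
    linear_combination s.p ^ 2 * (2 * s.ρ + (k - 1) * s.p) * hΓk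
  rw [this]
  nlinarith [s.hρ, s.hp, mul_pos s.hρ s.hp, mul_pos (mul_pos s.hp s.hp) s.hρ,
    mul_pos (mul_pos s.hp s.hp) s.hp]

lemma lamX4_eq : s.lamX4 Γ = maxSpeed s.u1 s.u2 (s.cs Γ) := by
  simp only [lamX4, maxSpeed, lorentz, one_div, div_inv_eq_mul]

lemma lamX1_eq : s.lamX1 Γ = -maxSpeed (-s.u1) s.u2 (s.cs Γ) := by
  simp only [lamX1, maxSpeed, lorentz, one_div, div_inv_eq_mul, neg_sq]
  ring

lemma lamY4_eq : s.lamY4 Γ = maxSpeed s.u2 s.u1 (s.cs Γ) := by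
  simp only [lamY4, maxSpeed, lorentz, one_div, div_inv_eq_mul, add_comm (s.u2 ^ 2)]

lemma lamY1_eq : s.lamY1 Γ = -maxSpeed (-s.u2) s.u1 (s.cs Γ) := by
  simp only [lamY1, maxSpeed, lorentz, one_div, div_inv_eq_mul, neg_sq, add_comm (s.u2 ^ 2)]
  ring

lemma directional_mem_admissibleCone (hΓ1 : 1 < Γ) (hΓ2 : Γ ≤ 2) {u v : ℝ}
    (huv : u ^ 2 + v ^ 2 = s.u1 ^ 2 + s.u2 ^ 2) (hc : maxSpeed u v (s.cs Γ) ≤ c) :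
    ![s.ρ * s.lorentz * (c - u), s.ρ * s.enth Γ * s.lorentz ^ 2 * u * (c - u) - s.p,
      s.ρ * s.enth Γ * s.lorentz ^ 2 * v * (c - u),
      s.ρ * s.enth Γ * s.lorentz ^ 2 * (c - u) - s.p * c] ∈ admissibleCone := by
  have hw : u ^ 2 + v ^ 2 < 1 := huv ▸ s.hu
  exact smul_sub_flux_mem_admissibleCone s.hρ s.hp (s.p_lt_rho_mul_enth hΓ1)
    (s.rho_sq_add_p_sq_lt hΓ1 hΓ2) (s.p_sq_lt_cs_sq_mul hΓ1 hΓ2) (s.cs_sq_lt_one hΓ1 hΓ2)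
    s.lorentz_pos (huv ▸ s.lorentz_sq_mul)
    ((lt_maxSpeed (s.cs_pos hΓ1) (s.cs_sq_lt_one hΓ1 hΓ2) hw).trans_le hc)
    (sq_mul_le_of_maxSpeed_le (s.cs_pos hΓ1).le (s.cs_sq_lt_one hΓ1 hΓ2) hw hc)

lemma smul_U_sub_Fx_mem_admissibleCone (hΓ1 : 1 < Γ) (hΓ2 : Γ ≤ 2) (hc : s.lamX4 Γ ≤ c) :
    c • s.U Γ - s.Fx Γ ∈ admissibleCone := by
  convert s.directional_mem_admissibleCone hΓ1 hΓ2 rfl (s.lamX4_eq ▸ hc) using 1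
  ext i
  fin_cases i <;> simp [U, Fx, D, m1, m2, En] <;> ring

lemma Fx_sub_smul_U_mem_admissibleCone (hΓ1 : 1 < Γ) (hΓ2 : Γ ≤ 2) (hc : c ≤ s.lamX1 Γ) :
    s.Fx Γ - c • s.U Γ ∈ admissibleCone := by
  refine mem_admissibleCone_of_momentum_sq_eq (s.directional_mem_admissibleCone hΓ1 hΓ2
    (u := -s.u1) (v := s.u2) (c := -c) (by rw [neg_sq]) (by linarith [s.lamX1_eq (Γ := Γ)]))
    ?_ ?_ ?_ <;>
    simp [U, Fx, D, m1, m2, En] <;> ring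

lemma smul_U_sub_Fy_mem_admissibleCone (hΓ1 : 1 < Γ) (hΓ2 : Γ ≤ 2) (hc : s.lamY4 Γ ≤ c) :
    c • s.U Γ - s.Fy Γ ∈ admissibleCone := by
  refine mem_admissibleCone_of_momentum_sq_eq
    (s.directional_mem_admissibleCone hΓ1 hΓ2 (add_comm _ _) (s.lamY4_eq ▸ hc)) ?_ ?_ ?_ <;>
    simp [U, Fy, D, m1, m2, En] <;> ring

lemma Fy_sub_smul_U_mem_admissibleCone (hΓ1 : 1 < Γ) (hΓ2 : Γ ≤ 2) (hc : c ≤ s.lamY1 Γ) :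
    s.Fy Γ - c • s.U Γ ∈ admissibleCone := by
  refine mem_admissibleCone_of_momentum_sq_eq (s.directional_mem_admissibleCone hΓ1 hΓ2
    (u := -s.u2) (v := s.u1) (c := -c) (by rw [neg_sq, add_comm])
    (by linarith [s.lamY1_eq (Γ := Γ)])) ?_ ?_ ?_ <;>
    simp [U, Fy, D, m1, m2, En] <;> ring

end RHDState

theorem intermediate_state_admissible_general (Γ : ℝ) (hΓ1 : 1 < Γ) (hΓ2 : Γ ≤ 2)
    (sLD sRD sLU sRU : RHDState)
    (SL SR SD SU : ℝ)
    (hSL : SL = 2 * min (min (sLD.lamX1 Γ) (sRD.lamX1 Γ))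
                        (min (sLU.lamX1 Γ) (sRU.lamX1 Γ)))
    (hSR : SR = 2 * max (max (sLD.lamX4 Γ) (sRD.lamX4 Γ))
                        (max (sLU.lamX4 Γ) (sRU.lamX4 Γ)))
    (hSD : SD = 2 * min (min (sLD.lamY1 Γ) (sRD.lamY1 Γ))
                        (min (sLU.lamY1 Γ) (sRU.lamY1 Γ)))
    (hSU : SU = 2 * max (max (sLD.lamY4 Γ) (sRD.lamY4 Γ))
                        (max (sLU.lamY4 Γ) (sRU.lamY4 Γ)))
    (hL0 : SL < 0) (hR0 : 0 < SR) (hD0 : SD < 0) (hU0 : 0 < SU)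
    (Ustar : Fin 4 → ℝ)
    (hUstar : Ustar = ((SR - SL) * (SU - SD))⁻¹ •
      ((SR * SU) • sRU.U Γ + (SL * SD) • sLD.U Γ - (SR * SD) • sRD.U Γ -
        (SL * SU) • sLU.U Γ - SU • (sRU.Fx Γ - sLU.Fx Γ) +
        SD • (sRD.Fx Γ - sLD.Fx Γ) - SR • (sRU.Fy Γ - sRD.Fy Γ) +
        SL • (sLU.Fy Γ - sLD.Fy Γ))) :
    Ustar 0 > 0 ∧ Ustar 3 > 0 ∧
      (Ustar 3) ^ 2 - (Ustar 0) ^ 2 - ((Ustar 1) ^ 2 + (Ustar 2) ^ 2) > 0 := by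
  have hsum : Ustar = ((SR - SL) * (SU - SD))⁻¹ •
      (SU • ((SR / 2) • sRU.U Γ - sRU.Fx Γ) + SR • ((SU / 2) • sRU.U Γ - sRU.Fy Γ) +
        (-SD) • (sLD.Fx Γ - (SL / 2) • sLD.U Γ) + (-SL) • (sLD.Fy Γ - (SD / 2) • sLD.U Γ) +
        (-SD) • ((SR / 2) • sRD.U Γ - sRD.Fx Γ) + SR • (sRD.Fy Γ - (SD / 2) • sRD.U Γ) +
        SU • (sLU.Fx Γ - (SL / 2) • sLU.U Γ) + (-SL) • ((SU / 2) • sLU.U Γ - sLU.Fy Γ)) := by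
    rw [hUstar]
    module
  have hRUx := sRU.smul_U_sub_Fx_mem_admissibleCone hΓ1 hΓ2 (c := SR / 2) (by simp [hSR])
  have hRDx := sRD.smul_U_sub_Fx_mem_admissibleCone hΓ1 hΓ2 (c := SR / 2) (by simp [hSR])
  have hLDx := sLD.Fx_sub_smul_U_mem_admissibleCone hΓ1 hΓ2 (c := SL / 2) (by simp [hSL])
  have hLUx := sLU.Fx_sub_smul_U_mem_admissibleCone hΓ1 hΓ2 (c := SL / 2) (by simp [hSL])
  have hRUy := sRU.smul_U_sub_Fy_mem_admissibleCone hΓ1 hΓ2 (c := SU / 2) (by simp [hSU])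
  have hLUy := sLU.smul_U_sub_Fy_mem_admissibleCone hΓ1 hΓ2 (c := SU / 2) (by simp [hSU])
  have hLDy := sLD.Fy_sub_smul_U_mem_admissibleCone hΓ1 hΓ2 (c := SD / 2) (by simp [hSD])
  have hRDy := sRD.Fy_sub_smul_U_mem_admissibleCone hΓ1 hΓ2 (c := SD / 2) (by simp [hSD])
  have hmem : Ustar ∈ admissibleCone := by
    rw [hsum]
    refine admissibleCone.smul_mem (inv_pos.2 (by nlinarith)) ?_
    apply_rules [add_mem, admissibleCone.smul_mem, neg_pos.2]
  obtain ⟨h0, h3, hspace⟩ := hmem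
  exact ⟨h0, h3, by linarith⟩

/-- PCP property of the 2D HLL intermediate state: with wave speeds
`S_L = 2·min λ_A^{(1)}`, `S_R = 2·max λ_A^{(4)}`, `S_D = 2·min λ_B^{(1)}`,
`S_U = 2·max λ_B^{(4)}` over the four admissible corner states, and
`S_L < 0 < S_R`, `S_D < 0 < S_U`, the intermediate state `U*` satisfies
`D* > 0`, `E* > 0` and `(E*)² - (D*)² - |m*|² > 0`. -/
theorem intermediate_state_admissible (Γ : ℝ) (hΓ1 : 1 < Γ) (hΓ2 : Γ ≤ 2)
    (sLD sRD sLU sRU : RHDState)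
    (hLD : sLD.U Γ ∈ admissibleSet) (hRD : sRD.U Γ ∈ admissibleSet)
    (hLU : sLU.U Γ ∈ admissibleSet) (hRU : sRU.U Γ ∈ admissibleSet)
    (SL SR SD SU : ℝ)
    (hSL : SL = 2 * min (min (sLD.lamX1 Γ) (sRD.lamX1 Γ))
                        (min (sLU.lamX1 Γ) (sRU.lamX1 Γ)))
    (hSR : SR = 2 * max (max (sLD.lamX4 Γ) (sRD.lamX4 Γ))
                        (max (sLU.lamX4 Γ) (sRU.lamX4 Γ)))
    (hSD : SD = 2 * min (min (sLD.lamY1 Γ) (sRD.lamY1 Γ))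
                        (min (sLU.lamY1 Γ) (sRU.lamY1 Γ)))
    (hSU : SU = 2 * max (max (sLD.lamY4 Γ) (sRD.lamY4 Γ))
                        (max (sLU.lamY4 Γ) (sRU.lamY4 Γ)))
    (hL0 : SL < 0) (hR0 : 0 < SR) (hD0 : SD < 0) (hU0 : 0 < SU)
    (Ustar : Fin 4 → ℝ)
    (hUstar : Ustar = ((SR - SL) * (SU - SD))⁻¹ •
      ((SR * SU) • sRU.U Γ + (SL * SD) • sLD.U Γ - (SR * SD) • sRD.U Γ -
        (SL * SU) • sLU.U Γ - SU • (sRU.Fx Γ - sLU.Fx Γ) +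
        SD • (sRD.Fx Γ - sLD.Fx Γ) - SR • (sRU.Fy Γ - sRD.Fy Γ) +
        SL • (sLU.Fy Γ - sLD.Fy Γ))) :
    Ustar 0 > 0 ∧ Ustar 3 > 0 ∧
      (Ustar 3) ^ 2 - (Ustar 0) ^ 2 - ((Ustar 1) ^ 2 + (Ustar 2) ^ 2) > 0 :=
  intermediate_state_admissible_general Γ hΓ1 hΓ2 sLD sRD sLU sRU SL SR SD SU hSL hSR hSD hSU hL0
    hR0 hD0 hU0 Ustar hUstar
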